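/- For every integer k ≥ 1, every real α ≥ 1, and every β with 0 ≤ β < 2k − 1, the discrete absolute moment m_β(J_k) := sup_{u ∈ ℝ} ∑_{j ∈ ℤ} |J_k(u − j)| · |u − j|^β of the univariate Jackson-type kernel J_k is finite. -/

import Mathlib

/-!
Since `|sinc y| ≤ min 1 (1 / (π |y|))`, the Jackson kernel decays like
`|J_k x| ≤ C (1 + |x|)^(-2k)`, so `|J_k x| |x|^β ≤ C (1 + |x|)^(-(2k - β))`. Because
`1 + |j - round u| ≤ 2 (1 + |u - j|)`, the sum over `j` is dominated, uniformly in `u`, by a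
reindexing of `∑ₘ (1 + |m|)^(-(2k - β))`, which converges as `2k - β > 1`.
-/

open MeasureTheory Filter

open Real in
/-- The cardinal sine function `sinc x = sin (π x) / (π x)`, with `sinc 0 = 1`. -/
noncomputable def sinc (x : ℝ) : ℝ :=
  if x = 0 then 1 else Real.sin (π * x) / (π * x)

open Real in
/-- The univariate Fejér kernel. -/
noncomputable def fejer (x : ℝ) : ℝ := (1 / 2) * _root_.sinc (x / 2) ^ 2

open Real in
/-- The univariate Jackson-type kernel of order `k` with parameter `α`. -/
noncomputable def jackson (k : ℕ) (α : ℝ) (x : ℝ) : ℝ :=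
  (∫ u : ℝ, _root_.sinc (u / (2 * k * π * α)) ^ (2 * k))⁻¹ * _root_.sinc (x / (2 * k * π * α)) ^ (2 * k)

/-- Discrete absolute moment of order `β` of a univariate function. -/
noncomputable def mom1 (χ : ℝ → ℝ) (β : ℝ) : ENNReal :=
  ⨆ u : ℝ, ∑' k : ℤ, ENNReal.ofReal (|χ (u - (k : ℝ))| * |u - (k : ℝ)| ^ β)

open Real

lemma sinc_eq_real_sinc (x : ℝ) : _root_.sinc x = Real.sinc (π * x) := by
  simp [_root_.sinc, Real.sinc, pi_ne_zero]

lemma Real.abs_sinc_le_inv_abs {x : ℝ} (hx : x ≠ 0) : |Real.sinc x| ≤ |x|⁻¹ := by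
  rw [sinc_of_ne_zero hx, abs_div, div_eq_mul_inv]
  exact mul_le_of_le_one_left (by positivity) (abs_sin_le_one x)

lemma abs_sinc_div_pi_mul_le {B : ℝ} (hB : 0 < B) (x : ℝ) :
    |_root_.sinc (x / (π * B))| ≤ (1 + B) / (1 + |x|) := by
  have hx : 0 < 1 + |x| := by positivity
  rw [sinc_eq_real_sinc, show π * (x / (π * B)) = x / B by field_simp]
  rcases le_or_gt |x| B with hxB | hxB
  · calc |Real.sinc (x / B)| ≤ 1 := abs_sinc_le_one _
      _ ≤ (1 + B) / (1 + |x|) := by rw [le_div_iff₀ hx]; linarith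
  · have hx0 : 0 < |x| := hB.trans hxB
    calc |Real.sinc (x / B)| ≤ |x / B|⁻¹ :=
          abs_sinc_le_inv_abs (div_ne_zero (abs_pos.mp hx0) hB.ne')
      _ = B / |x| := by rw [abs_div, abs_of_pos hB, inv_div]
      _ ≤ (1 + B) / (1 + |x|) := by rw [div_le_div_iff₀ hx0 hx]; nlinarith

lemma abs_jackson_le {k : ℕ} (hk : k ≠ 0) {α : ℝ} (hα : 0 < α) :
    ∃ C, ∀ x, |jackson k α x| ≤ C * (1 + |x|) ^ (-(2 * k : ℝ)) := by
  set B : ℝ := 2 * k * α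
  have hB : 0 < B := by positivity
  refine ⟨|(∫ u : ℝ, _root_.sinc (u / (2 * k * π * α)) ^ (2 * k))⁻¹| * (1 + B) ^ (2 * k),
    fun x => ?_⟩
  have hx : 0 < 1 + |x| := by positivity
  have hsinc : |_root_.sinc (x / (2 * k * π * α))| ≤ (1 + B) / (1 + |x|) := by
    convert abs_sinc_div_pi_mul_le hB x using 4; ring
  have hpow : (1 + |x|) ^ (-(2 * k : ℝ)) = ((1 + |x|) ^ (2 * k))⁻¹ := by
    rw [rpow_neg hx.le, ← rpow_natCast]
    push_cast
    rfl
  rw [jackson, abs_mul, abs_pow, hpow, ← div_eq_mul_inv, mul_div_assoc, ← div_pow]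
  gcongr

lemma summable_one_add_abs_int_rpow_neg {s : ℝ} (hs : 1 < s) :
    Summable fun m : ℤ => (1 + |(m : ℝ)|) ^ (-s) := by
  refine (summable_abs_int_rpow hs).of_norm_bounded_eventually ?_
  filter_upwards [(Set.finite_singleton (0 : ℤ)).compl_mem_cofinite] with m hm
  have hm : 0 < |(m : ℝ)| := by simpa using hm
  rw [norm_of_nonneg (by positivity)]
  exact rpow_le_rpow_of_nonpos hm (by linarith) (by linarith)

lemma one_add_abs_int_sub_round_le (u : ℝ) (j : ℤ) :
    1 + |((j - round u : ℤ) : ℝ)| ≤ 2 * (1 + |u - j|) := by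
  have hround : |u - round u| ≤ 1 / 2 := abs_sub_round u
  have htri : |(j : ℝ) - round u| ≤ |u - round u| + |u - j| := by
    simpa using abs_sub (u - round u) (u - j)
  push_cast
  linarith [abs_nonneg (u - j)]

lemma one_add_abs_sub_rpow_neg_le (u : ℝ) (j : ℤ) {s : ℝ} (hs : 0 ≤ s) :
    (1 + |u - j|) ^ (-s) ≤ 2 ^ s * (1 + |((j - round u : ℤ) : ℝ)|) ^ (-s) := by
  have hpos : 0 < (1 + |((j - round u : ℤ) : ℝ)|) / 2 := by positivity
  calc (1 + |u - j|) ^ (-s) ≤ ((1 + |((j - round u : ℤ) : ℝ)|) / 2) ^ (-s) :=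
        rpow_le_rpow_of_nonpos hpos (by linarith [one_add_abs_int_sub_round_le u j])
          (neg_nonpos.mpr hs)
    _ = 2 ^ s * (1 + |((j - round u : ℤ) : ℝ)|) ^ (-s) := by
        rw [div_rpow (by positivity) zero_le_two, rpow_neg zero_le_two, div_inv_eq_mul, mul_comm]

theorem mom1_lt_top_of_abs_le_rpow {χ : ℝ → ℝ} {C β γ : ℝ} (hβ : 0 ≤ β)
    (hβγ : β + 1 < γ)
    (hχ : ∀ x, |χ x| ≤ C * (1 + |x|) ^ (-γ)) : mom1 χ β < ⊤ := by
  have hC : 0 ≤ C := by simpa using (abs_nonneg _).trans (hχ 0)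
  set s := γ - β
  have hmoment : ∀ x, |χ x| * |x| ^ β ≤ C * (1 + |x|) ^ (-s) := fun x => by
    have hx : 0 < 1 + |x| := by positivity
    calc |χ x| * |x| ^ β ≤ C * (1 + |x|) ^ (-γ) * (1 + |x|) ^ β :=
          mul_le_mul (hχ x) (rpow_le_rpow (abs_nonneg x) (by linarith) hβ) (by positivity)
            (by positivity)
      _ = C * (1 + |x|) ^ (-s) := by
          rw [mul_assoc, ← rpow_add hx, show -γ + β = -s by simp only [s]; ring]
  set g : ℤ → ℝ := fun m => C * 2 ^ s * (1 + |(m : ℝ)|) ^ (-s)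
  have hg : Summable g := (summable_one_add_abs_int_rpow_neg (by linarith)).mul_left _
  refine lt_of_le_of_lt (iSup_le fun u => ?_) (ENNReal.ofReal_lt_top (r := ∑' m, g m))
  rw [ENNReal.ofReal_tsum_of_nonneg (fun m => by positivity) hg]
  calc ∑' j : ℤ, ENNReal.ofReal (|χ (u - j)| * |u - j| ^ β)
      ≤ ∑' j : ℤ, ENNReal.ofReal (g (j - round u)) := by
        refine ENNReal.tsum_le_tsum fun j => ENNReal.ofReal_le_ofReal ?_
        calc |χ (u - j)| * |u - j| ^ β ≤ C * (1 + |u - j|) ^ (-s) := hmoment _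
          _ ≤ g (j - round u) :=
            (mul_le_mul_of_nonneg_left (one_add_abs_sub_rpow_neg_le u j (by linarith))
              hC).trans_eq (mul_assoc _ _ _).symm
    _ = ∑' m : ℤ, ENNReal.ofReal (g m) :=
      (Equiv.subRight (round u)).tsum_eq fun m => ENNReal.ofReal (g m)

theorem stmt13 (k : ℕ) (hk : 1 ≤ k) (α : ℝ) (hα : 1 ≤ α)
    (β : ℝ) (hβ0 : 0 ≤ β) (hβ1 : β < 2 * k - 1) :
    mom1 (jackson k α) β < ⊤ := by
  obtain ⟨C, hC⟩ := abs_jackson_le (k := k) (by omega) (α := α) (by linarith)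
  exact mom1_lt_top_of_abs_le_rpow hβ0 (by linarith) hC
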